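/- Let {R_1,...,R_l} be an (n, (k,...,k,k−1), k−1)-partitioned difference family over Z_n ≅ Z_{k−1} × Z_{tk+1} with gcd(k−1, tk+1) = 1, l = t(k−1)+1, and R_l = Z_{k−1} × {0}. Define V_i = R_i for 1 ≤ i ≤ t(k−1) and V_{t(k−1)+j} = {(j,0)} for 1 ≤ j ≤ k−2. Then {V_1,...,V_{t(k−1)+k−2}} is a cyclic (n, t(k−1)+k−2, K, n−1, (t+1)k² − (t+3)k)-SWEDF, where K consists of t(k−1) entries equal to k and k−2 entries equal to 1: every nonzero element of Z_{k−1} × Z_{tk+1} appears exactly (t+1)k² − (t+3)k times in ⋃_{i≠j} D(V_i, Ṽ_j) with k̃ = k. -/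
import Mathlib


/-- The multiset of external differences `{x - y : x ∈ X, y ∈ Y}` (with multiplicity). -/
def extDiff {G : Type*} [Sub G] (X Y : Multiset G) : Multiset G :=
  X.bind fun x => Y.map fun y => x - y

/-- The multiset `⋃_{i ≠ j} D(B_i, B̃_j)`, where the standard weighted multiset `B̃_j`
repeats each element of `B_j` exactly `ktil / |B_j|` times. -/
def wtotal {G : Type*} [Sub G] {m : ℕ} (B : Fin m → Finset G) (ktil : ℕ) : Multiset G :=
  ∑ i : Fin m, ∑ j : Fin m,
    if i ≠ j then extDiff (B i).val ((ktil / (B j).card) • (B j).val) else 0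

section helpers
variable {G : Type*} [AddCommGroup G] [DecidableEq G]

lemma extDiff_zero_right (X : Multiset G) : extDiff X (0 : Multiset G) = 0 := by
  simp [extDiff]

lemma extDiff_add_right (X Y Z : Multiset G) :
    extDiff X (Y + Z) = extDiff X Y + extDiff X Z := by
  simp only [extDiff, Multiset.map_add]
  exact Multiset.bind_add _ _ _

lemma extDiff_smul_right (X Y : Multiset G) (c : ℕ) :
    extDiff X (c • Y) = c • extDiff X Y := by
  induction c with
  | zero => simp [extDiff_zero_right]
  | succ c ih => rw [succ_nsmul, succ_nsmul, extDiff_add_right, ih]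

lemma extDiff_singleton_right (X : Multiset G) (s : G) :
    extDiff X {s} = X.map (fun x => x - s) := by
  simp only [extDiff, Multiset.map_singleton]
  exact Multiset.bind_singleton _ (fun x => x - s)

lemma extDiff_singleton_left (s : G) (Y : Multiset G) :
    extDiff {s} Y = Y.map (fun y => s - y) := by
  simp [extDiff, Multiset.singleton_bind]

lemma count_map_sub_const (X : Multiset G) (s δ : G) :
    (X.map (fun x => x - s)).count δ = X.count (δ + s) := by
  simpa using Multiset.count_map_eq_count' (fun x => x - s) X sub_left_injective (δ + s)

lemma count_map_const_sub (x : G) (Y : Multiset G) (δ : G) :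
    (Y.map (fun y => x - y)).count δ = Y.count (x - δ) := by
  simpa [sub_sub_cancel] using Multiset.count_map_eq_count' (fun y => x - y) Y sub_right_injective (x - δ)

lemma extDiff_cons_left (x : G) (X Y : Multiset G) :
    extDiff (x ::ₘ X) Y = Y.map (fun y => x - y) + extDiff X Y := by
  simp [extDiff, Multiset.cons_bind]

lemma count_extDiff_left (X Y : Multiset G) (δ : G) :
    (extDiff X Y).count δ = (X.map fun x => Y.count (x - δ)).sum := by
  induction X using Multiset.induction_on with
  | empty => simp [extDiff]
  | cons x X ih =>
    rw [extDiff_cons_left, Multiset.count_add, count_map_const_sub, ih,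
      Multiset.map_cons, Multiset.sum_cons]

lemma count_extDiff_right (X Y : Multiset G) (δ : G) :
    (extDiff X Y).count δ = (Y.map fun y => X.count (y + δ)).sum := by
  induction Y using Multiset.induction_on with
  | empty => simp [extDiff_zero_right]
  | cons y Y ih =>
    have h : y ::ₘ Y = {y} + Y := by simp
    rw [h, extDiff_add_right, Multiset.count_add, extDiff_singleton_right,
      count_map_sub_const, ih, Multiset.map_add, Multiset.sum_add,
      Multiset.map_singleton, Multiset.sum_singleton, add_comm δ y]

lemma count_extDiff_singleton_right (X : Multiset G) (s δ : G) :
    (extDiff X {s}).count δ = X.count (δ + s) := by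
  rw [extDiff_singleton_right, count_map_sub_const]

lemma count_extDiff_singleton_left (s : G) (Y : Multiset G) (δ : G) :
    (extDiff {s} Y).count δ = Y.count (s - δ) := by
  rw [extDiff_singleton_left, count_map_const_sub]

lemma count_extDiff_smul_right (X Y : Multiset G) (c : ℕ) (δ : G) :
    (extDiff X (c • Y)).count δ = c * (extDiff X Y).count δ := by
  rw [extDiff_smul_right, Multiset.count_nsmul]

end helpers

lemma arith2 (k t A : ℕ) (hk : 3 ≤ k) (ht : 1 ≤ t)
    (h : A + (k-1) + (k-1) = (k-1)*(t*k+1) - k + 1) :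
    A + (k-2)*k + (k-2) = (t+1)*k^2 - (t+3)*k := by
  have htk : k ≤ t * k := Nat.le_mul_of_pos_left k ht
  have hP1 : k ≤ (k-1)*(t*k+1) := le_trans (by omega : k ≤ 2*(k+1))
    (Nat.mul_le_mul (by omega) (by omega))
  have hP2 : (t+3)*k ≤ (t+1)*k^2 := by
    calc (t+3)*k ≤ ((t+1)*3)*k := Nat.mul_le_mul_right k (by omega)
      _ ≤ ((t+1)*k)*k := Nat.mul_le_mul_right k (Nat.mul_le_mul_left _ hk)
      _ = (t+1)*k^2 := by ring
  zify [show 1 ≤ k by omega, show 2 ≤ k by omega, hP1, hP2] at h ⊢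
  linear_combination h

lemma arith1 (k t A : ℕ) (hk : 3 ≤ k) (ht : 1 ≤ t)
    (h : A = (k-1)*(t*k+1) - k + 1) :
    A + k * (k - 2 - 1) = (t+1)*k^2 - (t+3)*k := by
  have htk : k ≤ t * k := Nat.le_mul_of_pos_left k ht
  have hP1 : k ≤ (k-1)*(t*k+1) := le_trans (by omega : k ≤ 2*(k+1))
    (Nat.mul_le_mul (by omega) (by omega))
  have hP2 : (t+3)*k ≤ (t+1)*k^2 := by
    calc (t+3)*k ≤ ((t+1)*3)*k := Nat.mul_le_mul_right k (by omega)
      _ ≤ ((t+1)*k)*k := Nat.mul_le_mul_right k (Nat.mul_le_mul_left _ hk)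
      _ = (t+1)*k^2 := by ring
  zify [show 1 ≤ k by omega, show 2 ≤ k by omega, show 1 ≤ k - 2 by omega,
    hP1, hP2] at h ⊢
  linear_combination h

set_option maxHeartbeats 1000000 in
/-- Construction D: from an `(n,(k,...,k,k-1),k-1)`-PDF over `ℤ_{k-1} × ℤ_{tk+1}` with last
block `ℤ_{k-1} × {0}`, one obtains a cyclic
`(n, t(k-1)+k-2, (k,...,k,1,...,1), n-1, (t+1)k² - (t+3)k)`-SWEDF. -/
theorem stmt18 (k t : ℕ) [NeZero (k - 1)] (hk : 3 ≤ k) (ht : 1 ≤ t)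
    (hgcd : Nat.gcd (k - 1) (t * k + 1) = 1)
    (R : Fin (t * (k - 1) + 1) → Finset (ZMod (k - 1) × ZMod (t * k + 1)))
    (hdisj : ∀ i j, i ≠ j → Disjoint (R i) (R j))
    (hcover : Finset.univ.biUnion R =
      (Finset.univ : Finset (ZMod (k - 1) × ZMod (t * k + 1))))
    (hcards : ∀ i : Fin (t * (k - 1) + 1), (i : ℕ) < t * (k - 1) → (R i).card = k)
    (hlast : R (Fin.last (t * (k - 1))) =
      Finset.univ.image fun x : ZMod (k - 1) => (x, (0 : ZMod (t * k + 1))))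
    (hPDF : ∀ δ : ZMod (k - 1) × ZMod (t * k + 1), δ ≠ 0 →
      Multiset.count δ
        (∑ i, ∑ j, if i ≠ j then extDiff (R i).val (R j).val else 0) =
      (k - 1) * (t * k + 1) - k + 1)
    (V : Fin (t * (k - 1) + (k - 2)) → Finset (ZMod (k - 1) × ZMod (t * k + 1)))
    (hV : ∀ i : Fin (t * (k - 1) + (k - 2)),
      V i = if h : (i : ℕ) < t * (k - 1)
        then R ⟨(i : ℕ), by omega⟩
        else {((((i : ℕ) - t * (k - 1) + 1 : ℕ) : ZMod (k - 1)),
               (0 : ZMod (t * k + 1)))}) :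
    ∀ δ : ZMod (k - 1) × ZMod (t * k + 1), δ ≠ 0 →
      Multiset.count δ (wtotal V k) = (t + 1) * k ^ 2 - (t + 3) * k := by
  intro δ hδ
  have hkpos : 0 < k := by omega
  -- each element lies in exactly one block
  have L0 : ∀ g : ZMod (k - 1) × ZMod (t * k + 1),
      (∑ i : Fin (t * (k - 1) + 1), (R i).val.count g) = 1 := by
    intro g
    have hg : g ∈ Finset.univ.biUnion R := by rw [hcover]; exact Finset.mem_univ g
    obtain ⟨i₀, -, hi₀⟩ := Finset.mem_biUnion.mp hg
    have key : ∀ i, (R i).val.count g = if g ∈ R i then 1 else 0 := by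
      intro i
      by_cases h : g ∈ R i
      · rw [if_pos h]; exact Multiset.count_eq_one_of_mem (R i).nodup h
      · rw [if_neg h]; exact Multiset.count_eq_zero_of_notMem h
    rw [Finset.sum_congr rfl (fun i _ => key i),
      Finset.sum_eq_single_of_mem i₀ (Finset.mem_univ i₀)
        (fun b _ hb => if_neg (fun hgb =>
          Finset.disjoint_left.mp (hdisj b i₀ hb) hgb hi₀)),
      if_pos hi₀]
  have hmemlast : ∀ g : ZMod (k - 1) × ZMod (t * k + 1),
      g ∈ R (Fin.last (t * (k - 1))) ↔ g.2 = 0 := by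
    intro g
    rw [hlast, Finset.mem_image]
    constructor
    · rintro ⟨x, -, rfl⟩; rfl
    · intro h2; exact ⟨g.1, Finset.mem_univ _, by rw [← h2]⟩
  have L1 : ∀ g : ZMod (k - 1) × ZMod (t * k + 1),
      (∑ i : Fin (t * (k - 1)), (R (Fin.castSucc i)).val.count g)
      = if g.2 = 0 then 0 else 1 := by
    intro g
    have h0 := L0 g
    rw [Fin.sum_univ_castSucc] at h0
    have hl : (R (Fin.last (t * (k - 1)))).val.count g = if g.2 = 0 then 1 else 0 := by
      by_cases h2 : g.2 = 0
      · rw [if_pos h2]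
        exact Multiset.count_eq_one_of_mem (R _).nodup ((hmemlast g).mpr h2)
      · rw [if_neg h2]
        exact Multiset.count_eq_zero_of_notMem (fun hm => h2 ((hmemlast g).mp hm))
    by_cases h2 : g.2 = 0 <;> simp only [h2, if_true, if_false] at hl ⊢ <;> omega
  -- the value of the last block
  have hlastval : (R (Fin.last (t * (k - 1)))).val
      = Multiset.map (fun x : ZMod (k-1) => (x, (0 : ZMod (t*k+1)))) Finset.univ.val := by
    rw [hlast]
    exact Finset.image_val_of_injOn (fun a _ b _ h => by simpa using h)
  have hcardZ : (Finset.univ : Finset (ZMod (k-1))).card = k - 1 := by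
    simp [Finset.card_univ, ZMod.card]
  -- the PDF identity, split
  have hP : (∑ i : Fin (t * (k - 1) + 1), ∑ j : Fin (t * (k - 1) + 1),
      if i ≠ j then (extDiff (R i).val (R j).val).count δ else 0)
      = (k-1)*(t*k+1) - k + 1 := by
    rw [← hPDF δ hδ]
    simp only [Multiset.count_sum', apply_ite (Multiset.count δ), Multiset.count_zero]
  have hsplit : ∀ (f : Fin (t * (k - 1) + 1) → Fin (t * (k - 1) + 1) → ℕ),
      (∑ i, ∑ j, f i j)
        = (∑ i : Fin (t * (k - 1)), ∑ j : Fin (t * (k - 1)), f i.castSucc j.castSucc)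
        + ((∑ i : Fin (t * (k - 1)), f i.castSucc (Fin.last (t * (k - 1))))
        + ((∑ j : Fin (t * (k - 1)), f (Fin.last (t * (k - 1))) j.castSucc)
        + f (Fin.last (t * (k - 1))) (Fin.last (t * (k - 1))))) := by
    intro f
    rw [Fin.sum_univ_castSucc (f := fun i => ∑ j, f i j)]
    simp only [Fin.sum_univ_castSucc]
    rw [Finset.sum_add_distrib]
    ring
  rw [hsplit] at hP
  rw [Finset.sum_congr rfl (fun i _ => if_pos (Fin.castSucc_lt_last i).ne),
    Finset.sum_congr rfl (fun j _ => if_pos (Fin.castSucc_lt_last j).ne'),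
    if_neg (by simp)] at hP
  set A := ∑ i : Fin (t * (k - 1)), ∑ j : Fin (t * (k - 1)),
    if i ≠ j then (extDiff (R i.castSucc).val (R j.castSucc).val).count δ else 0 with hA
  have hA1 : (∑ i : Fin (t * (k - 1)), ∑ j : Fin (t * (k - 1)),
      if i.castSucc ≠ j.castSucc
        then (extDiff (R i.castSucc).val (R j.castSucc).val).count δ else 0) = A := by
    refine Finset.sum_congr rfl fun i _ => Finset.sum_congr rfl fun j _ => ?_
    refine if_congr ?_ rfl rfl
    simp [Fin.castSucc_inj]
  have hX2 : (∑ i : Fin (t * (k - 1)),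
      (extDiff (R i.castSucc).val (R (Fin.last (t * (k - 1)))).val).count δ)
      = if δ.2 = 0 then 0 else (k-1) := by
    have step : ∀ i : Fin (t * (k - 1)),
        (extDiff (R i.castSucc).val (R (Fin.last (t * (k - 1)))).val).count δ
        = ∑ x : ZMod (k-1), (R i.castSucc).val.count ((x, (0:ZMod (t*k+1))) + δ) := by
      intro i
      rw [count_extDiff_right, hlastval, Multiset.map_map]
      rfl
    rw [Finset.sum_congr rfl (fun i _ => step i), Finset.sum_comm]
    have inner : ∀ x : ZMod (k-1),
        (∑ i : Fin (t * (k - 1)), (R i.castSucc).val.count ((x, (0:ZMod (t*k+1))) + δ))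
        = if δ.2 = 0 then 0 else 1 := by
      intro x
      rw [L1]
      congr 1
      simp [Prod.snd_add]
    rw [Finset.sum_congr rfl (fun x _ => inner x), Finset.sum_const, hcardZ]
    by_cases h2 : δ.2 = 0 <;> simp [h2]
  have hX3 : (∑ j : Fin (t * (k - 1)),
      (extDiff (R (Fin.last (t * (k - 1)))).val (R j.castSucc).val).count δ)
      = if δ.2 = 0 then 0 else (k-1) := by
    have step : ∀ j : Fin (t * (k - 1)),
        (extDiff (R (Fin.last (t * (k - 1)))).val (R j.castSucc).val).count δ
        = ∑ x : ZMod (k-1), (R j.castSucc).val.count ((x, (0:ZMod (t*k+1))) - δ) := by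
      intro j
      rw [count_extDiff_left, hlastval, Multiset.map_map]
      rfl
    rw [Finset.sum_congr rfl (fun j _ => step j), Finset.sum_comm]
    have inner : ∀ x : ZMod (k-1),
        (∑ j : Fin (t * (k - 1)), (R j.castSucc).val.count ((x, (0:ZMod (t*k+1))) - δ))
        = if δ.2 = 0 then 0 else 1 := by
      intro x
      rw [L1]
      congr 1
      simp [Prod.snd_sub, neg_eq_zero]
    rw [Finset.sum_congr rfl (fun x _ => inner x), Finset.sum_const, hcardZ]
    by_cases h2 : δ.2 = 0 <;> simp [h2]
  rw [hA1, hX2, hX3, add_zero] at hP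
  -- now the goal side
  have hVc : ∀ i : Fin (t*(k-1)), V (Fin.castAdd (k-2) i) = R i.castSucc := by
    intro i
    have hlt : ((Fin.castAdd (k-2) i : Fin (t*(k-1)+(k-2))) : ℕ) < t*(k-1) := by
      simpa using i.isLt
    rw [hV, dif_pos hlt]
    exact congrArg R (Fin.ext (by simp))
  have hVn : ∀ j : Fin (k-2), V (Fin.natAdd (t*(k-1)) j)
      = {((((j:ℕ)+1 : ℕ) : ZMod (k-1)), (0 : ZMod (t*k+1)))} := by
    intro j
    have hge : ¬ ((Fin.natAdd (t*(k-1)) j : Fin (t*(k-1)+(k-2))) : ℕ) < t*(k-1) := by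
      simp
    rw [hV, dif_neg hge]
    have hnat : ((Fin.natAdd (t*(k-1)) j : Fin (t*(k-1)+(k-2))) : ℕ) - t*(k-1) + 1
        = (j:ℕ)+1 := by simp
    rw [hnat]
  have hcard1 : ∀ i : Fin (t*(k-1)), (R i.castSucc).card = k :=
    fun i => hcards _ (by simpa using i.isLt)
  simp only [wtotal, Fin.sum_univ_add, Multiset.count_add, Multiset.count_sum',
    apply_ite (Multiset.count δ), Multiset.count_zero, hVc, hVn, hcard1,
    Finset.card_singleton, Nat.div_self hkpos, Nat.div_one, one_nsmul,
    Finset.singleton_val]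
  rw [Finset.sum_add_distrib, Finset.sum_add_distrib]
  -- auxiliary index facts
  have cross_ne : ∀ (x : Fin (t*(k-1))) (y : Fin (k-2)),
      Fin.castAdd (k-2) x ≠ Fin.natAdd (t*(k-1)) y := by
    intro x y h
    have h' := congrArg Fin.val h
    simp only [Fin.coe_castAdd, Fin.coe_natAdd] at h'
    have := x.isLt
    omega
  have hnatinj : ∀ (x y : Fin (k-2)),
      Fin.natAdd (t*(k-1)) x = Fin.natAdd (t*(k-1)) y → x = y := by
    intro x y h
    have h' := congrArg Fin.val h
    simp only [Fin.coe_natAdd] at h'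
    exact Fin.ext (by omega)
  -- the map j ↦ j+1 onto nonzero elements of ZMod (k-1)
  have hval : ∀ j : Fin (k-2), ((((j:ℕ)+1 : ℕ)) : ZMod (k-1)).val = (j:ℕ)+1 := by
    intro j
    exact ZMod.val_cast_of_lt (by have := j.isLt; omega)
  have L2 : ∀ v : ZMod (k-1),
      (∑ j : Fin (k-2), if ((((j:ℕ)+1:ℕ)) : ZMod (k-1)) = v then 1 else 0)
      = if v = 0 then 0 else 1 := by
    intro v
    by_cases hv : v = 0
    · rw [if_pos hv]
      refine Finset.sum_eq_zero fun j _ => if_neg fun h => ?_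
      have hj := hval j
      rw [h, hv, ZMod.val_zero] at hj
      omega
    · rw [if_neg hv]
      have hvpos : 0 < v.val := Nat.pos_of_ne_zero (fun h => hv ((ZMod.val_eq_zero v).mp h))
      have hvlt : v.val < k - 1 := ZMod.val_lt v
      rw [Finset.sum_eq_single_of_mem (⟨v.val - 1, by omega⟩ : Fin (k-2))
        (Finset.mem_univ _) (fun b _ hb => if_neg fun h => hb (Fin.ext (by
          have h1 := hval b
          rw [h] at h1
          show (b:ℕ) = (⟨v.val - 1, by omega⟩ : Fin (k-2)).val
          simp only []
          omega)))]
      rw [if_pos]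
      show ((((v.val - 1 : ℕ)+1 : ℕ)) : ZMod (k-1)) = v
      rw [show (v.val - 1) + 1 = v.val by omega]
      exact ZMod.natCast_zmod_val v
  -- the four blocks
  have H11 : (∑ x : Fin (t*(k-1)), ∑ y : Fin (t*(k-1)),
      if Fin.castAdd (k-2) x ≠ Fin.castAdd (k-2) y
      then Multiset.count δ (extDiff (R x.castSucc).val (R y.castSucc).val) else 0) = A := by
    rw [hA]
    refine Finset.sum_congr rfl fun x _ => Finset.sum_congr rfl fun y _ => ?_
    refine if_congr ?_ rfl rfl
    simp [Fin.ext_iff]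
  have H12 : (∑ x : Fin (t*(k-1)), ∑ y : Fin (k-2),
      if Fin.castAdd (k-2) x ≠ Fin.natAdd (t*(k-1)) y
      then Multiset.count δ (extDiff (R x.castSucc).val
        (k • ({((((y:ℕ)+1:ℕ) : ZMod (k-1)), (0 : ZMod (t*k+1)))} : Multiset _))) else 0)
      = if δ.2 = 0 then 0 else (k-2)*k := by
    have step : ∀ (x : Fin (t*(k-1))) (y : Fin (k-2)),
        (if Fin.castAdd (k-2) x ≠ Fin.natAdd (t*(k-1)) y
        then Multiset.count δ (extDiff (R x.castSucc).val
          (k • ({((((y:ℕ)+1:ℕ) : ZMod (k-1)), (0 : ZMod (t*k+1)))} : Multiset _))) else 0)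
        = k * (R x.castSucc).val.count (δ + ((((y:ℕ)+1:ℕ) : ZMod (k-1)), (0 : ZMod (t*k+1)))) := by
      intro x y
      rw [if_pos (cross_ne x y), count_extDiff_smul_right, count_extDiff_singleton_right]
    rw [Finset.sum_congr rfl fun x _ => Finset.sum_congr rfl fun y _ => step x y,
      Finset.sum_comm]
    have inner : ∀ y : Fin (k-2),
        (∑ x : Fin (t*(k-1)),
          k * (R x.castSucc).val.count (δ + ((((y:ℕ)+1:ℕ) : ZMod (k-1)), (0 : ZMod (t*k+1)))))
        = k * (if δ.2 = 0 then 0 else 1) := by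
      intro y
      rw [← Finset.mul_sum, L1]
      congr 1
      refine if_congr ?_ rfl rfl
      simp
    rw [Finset.sum_congr rfl fun y _ => inner y, Finset.sum_const, Finset.card_univ,
      Fintype.card_fin, smul_eq_mul]
    by_cases h2 : δ.2 = 0 <;> simp [h2, mul_comm]
  have H21 : (∑ x : Fin (k-2), ∑ y : Fin (t*(k-1)),
      if Fin.natAdd (t*(k-1)) x ≠ Fin.castAdd (k-2) y
      then Multiset.count δ (extDiff
        ({((((x:ℕ)+1:ℕ) : ZMod (k-1)), (0 : ZMod (t*k+1)))} : Multiset _)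
        (R y.castSucc).val) else 0)
      = if δ.2 = 0 then 0 else (k-2) := by
    have step : ∀ (x : Fin (k-2)) (y : Fin (t*(k-1))),
        (if Fin.natAdd (t*(k-1)) x ≠ Fin.castAdd (k-2) y
        then Multiset.count δ (extDiff
          ({((((x:ℕ)+1:ℕ) : ZMod (k-1)), (0 : ZMod (t*k+1)))} : Multiset _)
          (R y.castSucc).val) else 0)
        = (R y.castSucc).val.count (((((x:ℕ)+1:ℕ) : ZMod (k-1)), (0 : ZMod (t*k+1))) - δ) := by
      intro x y
      rw [if_pos (cross_ne y x).symm, count_extDiff_singleton_left]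
    rw [Finset.sum_congr rfl fun x _ => Finset.sum_congr rfl fun y _ => step x y]
    have inner : ∀ x : Fin (k-2),
        (∑ y : Fin (t*(k-1)),
          (R y.castSucc).val.count (((((x:ℕ)+1:ℕ) : ZMod (k-1)), (0 : ZMod (t*k+1))) - δ))
        = if δ.2 = 0 then 0 else 1 := by
      intro x
      rw [L1]
      refine if_congr ?_ rfl rfl
      simp [neg_eq_zero]
    rw [Finset.sum_congr rfl fun x _ => inner x, Finset.sum_const, Finset.card_univ,
      Fintype.card_fin, smul_eq_mul]
    by_cases h2 : δ.2 = 0 <;> simp [h2]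
  have H22 : (∑ x : Fin (k-2), ∑ y : Fin (k-2),
      if Fin.natAdd (t*(k-1)) x ≠ Fin.natAdd (t*(k-1)) y
      then Multiset.count δ (extDiff
        ({((((x:ℕ)+1:ℕ) : ZMod (k-1)), (0 : ZMod (t*k+1)))} : Multiset _)
        (k • ({((((y:ℕ)+1:ℕ) : ZMod (k-1)), (0 : ZMod (t*k+1)))} : Multiset _))) else 0)
      = if δ.2 = 0 then k * (k - 2 - 1) else 0 := by
    by_cases h2 : δ.2 = 0
    · rw [if_pos h2]
      have hδ1 : δ.1 ≠ 0 := fun h1 => hδ (Prod.ext_iff.mpr ⟨h1, h2⟩)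
      have step : ∀ x y : Fin (k-2),
          (if Fin.natAdd (t*(k-1)) x ≠ Fin.natAdd (t*(k-1)) y
          then Multiset.count δ (extDiff
            ({((((x:ℕ)+1:ℕ) : ZMod (k-1)), (0 : ZMod (t*k+1)))} : Multiset _)
            (k • ({((((y:ℕ)+1:ℕ) : ZMod (k-1)), (0 : ZMod (t*k+1)))} : Multiset _))) else 0)
          = k * (if ((((y:ℕ)+1:ℕ)) : ZMod (k-1)) = ((((x:ℕ)+1:ℕ) : ZMod (k-1)) - δ.1)
              then 1 else 0) := by
        intro x y
        have hcnt : Multiset.count δ (extDiff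
            ({((((x:ℕ)+1:ℕ) : ZMod (k-1)), (0 : ZMod (t*k+1)))} : Multiset _)
            (k • ({((((y:ℕ)+1:ℕ) : ZMod (k-1)), (0 : ZMod (t*k+1)))} : Multiset _)))
            = k * (if ((((y:ℕ)+1:ℕ)) : ZMod (k-1)) = ((((x:ℕ)+1:ℕ) : ZMod (k-1)) - δ.1)
                then 1 else 0) := by
          rw [count_extDiff_smul_right, count_extDiff_singleton_left,
            Multiset.count_singleton]
          congr 1
          refine if_congr ?_ rfl rfl
          rw [Prod.ext_iff]
          simp [h2, eq_comm]
        by_cases hne : Fin.natAdd (t*(k-1)) x ≠ Fin.natAdd (t*(k-1)) y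
        · rw [if_pos hne, hcnt]
        · push_neg at hne
          have hxy : x = y := hnatinj _ _ hne
          subst hxy
          rw [if_neg (by simp : ¬(Fin.natAdd (t*(k-1)) x ≠ Fin.natAdd (t*(k-1)) x)),
            if_neg (fun hc => hδ1 (sub_eq_self.mp hc.symm)), mul_zero]
      rw [Finset.sum_congr rfl fun x _ => Finset.sum_congr rfl fun y _ => step x y]
      have inner : ∀ x : Fin (k-2),
          (∑ y : Fin (k-2),
            k * (if ((((y:ℕ)+1:ℕ)) : ZMod (k-1)) = ((((x:ℕ)+1:ℕ) : ZMod (k-1)) - δ.1)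
              then 1 else 0))
          = k * (if ((((x:ℕ)+1:ℕ)) : ZMod (k-1)) = δ.1 then 0 else 1) := by
        intro x
        rw [← Finset.mul_sum, L2]
        congr 1
        refine if_congr ?_ rfl rfl
        exact sub_eq_zero
      rw [Finset.sum_congr rfl fun x _ => inner x, ← Finset.mul_sum]
      congr 1
      have e1 : (∑ x : Fin (k-2),
          if ((((x:ℕ)+1:ℕ)) : ZMod (k-1)) = δ.1 then 1 else 0) = 1 := by
        rw [L2, if_neg hδ1]
      have e2 : (∑ x : Fin (k-2),
          ((if ((((x:ℕ)+1:ℕ)) : ZMod (k-1)) = δ.1 then (0:ℕ) else 1)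
            + (if ((((x:ℕ)+1:ℕ)) : ZMod (k-1)) = δ.1 then 1 else 0))) = k - 2 := by
        have hone : ∀ x : Fin (k-2),
            ((if ((((x:ℕ)+1:ℕ)) : ZMod (k-1)) = δ.1 then (0:ℕ) else 1)
              + (if ((((x:ℕ)+1:ℕ)) : ZMod (k-1)) = δ.1 then 1 else 0)) = 1 := by
          intro x; split <;> rfl
        rw [Finset.sum_congr rfl fun x _ => hone x]
        simp
      rw [Finset.sum_add_distrib] at e2
      omega
    · rw [if_neg h2]
      refine Finset.sum_eq_zero fun x _ => Finset.sum_eq_zero fun y _ => ?_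
      rw [count_extDiff_smul_right, count_extDiff_singleton_left,
        Multiset.count_singleton]
      have hsub : ¬(((((x:ℕ)+1:ℕ) : ZMod (k-1)), (0:ZMod (t*k+1))) - δ
          = ((((y:ℕ)+1:ℕ) : ZMod (k-1)), (0:ZMod (t*k+1)))) := fun h => h2 (by
        have := congrArg Prod.snd h
        simpa [neg_eq_zero] using this)
      rw [if_neg hsub, mul_zero, ite_self]
  rw [H11, H12, H21, H22]
  by_cases h2 : δ.2 = 0
  · rw [if_pos h2] at hP
    rw [if_pos h2, if_pos h2, if_pos h2, add_zero, zero_add]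
    exact arith1 k t A hk ht (by simpa using hP)
  · rw [if_neg h2] at hP
    rw [if_neg h2, if_neg h2, if_neg h2, add_zero]
    exact arith2 k t A hk ht (by rw [← hP]; ring)
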